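/- Restricted to the invariant line x_1 = x_2 in the simplex, parametrized by z > 0 via (x_1,x_2,x_3) = (1/(z+2), 1/(z+2), z/(z+2)), the third component of the symmetric vector field satisfies F_3(1/(z+2), 1/(z+2), z/(z+2)) = −2·P_{a,β}(z) / ((1+2a)·(2 + z^β) · (z+2)). -/

import Mathlib

noncomputable def symF (a β : ℝ) (i : Fin 3) (x₁ x₂ x₃ : ℝ) : ℝ :=
  let S := x₁ ^ β + x₂ ^ β + x₃ ^ β
  match i with
  | 0 => (x₁ ^ β + a * (x₂ ^ β + x₃ ^ β)) / ((1 + 2 * a) * S) - x₁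
  | 1 => (x₂ ^ β + a * (x₁ ^ β + x₃ ^ β)) / ((1 + 2 * a) * S) - x₂
  | 2 => (x₃ ^ β + a * (x₁ ^ β + x₂ ^ β)) / ((1 + 2 * a) * S) - x₃

noncomputable def P (a β z : ℝ) : ℝ := a * z ^ (β + 1) - z ^ β + (1 + a) * z - 2 * a

/-!
On the line `x₁ = x₂` the quotient in `F₃` depends on the point `(u, u, v)` only through
`u ^ β` and `v ^ β`, and it is homogeneous of degree zero. Rescaling by `z + 2` moves the point
`(1, 1, z) / (z + 2)` to `(1, 1, z)`, after which the claim is an identity between rational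
functions of `z` and `z ^ β`, using `z ^ (β + 1) = z ^ β * z`.
-/

noncomputable def diagonalQuotient (a β u v : ℝ) : ℝ :=
  (v ^ β + 2 * a * u ^ β) / (2 * u ^ β + v ^ β)

lemma symF_two_diagonal (a β u v : ℝ) :
    symF a β 2 u u v = diagonalQuotient a β u v / (1 + 2 * a) - v := by
  simp only [symF, diagonalQuotient, div_div]
  congr 1
  congr 1 <;> ring

lemma diagonalQuotient_mul_left {c : ℝ} (hc : 0 < c) {u v : ℝ} (hu : 0 ≤ u) (hv : 0 ≤ v)
    (a β : ℝ) : diagonalQuotient a β (c * u) (c * v) = diagonalQuotient a β u v := by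
  have hcβ : c ^ β ≠ 0 := (Real.rpow_pos_of_pos hc β).ne'
  simp only [diagonalQuotient, Real.mul_rpow hc.le hu, Real.mul_rpow hc.le hv]
  rw [← mul_div_mul_left (v ^ β + 2 * a * u ^ β) _ hcβ]
  congr 1 <;> ring

lemma diagonalQuotient_one_left (a β v : ℝ) :
    diagonalQuotient a β 1 v = (v ^ β + 2 * a) / (2 + v ^ β) := by
  simp only [diagonalQuotient, Real.one_rpow, mul_one]

theorem symF3_on_diagonal_general (a β z : ℝ) (ha : 0 < a) (hz : 0 < z) :
    symF a β 2 (1 / (z + 2)) (1 / (z + 2)) (z / (z + 2))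
      = -2 * P a β z / ((1 + 2 * a) * (2 + z ^ β) * (z + 2)) := by
  have hz2 : 0 < z + 2 := by linarith
  have hquot :
      diagonalQuotient a β (1 / (z + 2)) (z / (z + 2)) = (z ^ β + 2 * a) / (2 + z ^ β) := by
    rw [one_div, div_eq_inv_mul, ← diagonalQuotient_one_left,
      ← diagonalQuotient_mul_left (inv_pos.2 hz2) zero_le_one hz.le, mul_one]
  have hzβ : 0 < z ^ β := Real.rpow_pos_of_pos hz β
  have h12a : 0 < 1 + 2 * a := by linarith
  rw [symF_two_diagonal, hquot, P, Real.rpow_add_one hz.ne']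
  field_simp
  ring

theorem symF3_on_diagonal (a β z : ℝ) (ha : 0 < a) (hβ : 0 < β) (hz : 0 < z) :
    symF a β 2 (1 / (z + 2)) (1 / (z + 2)) (z / (z + 2))
      = -2 * P a β z / ((1 + 2 * a) * (2 + z ^ β) * (z + 2)) :=
  symF3_on_diagonal_general a β z ha hz
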